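/- arXiv:2105.06166 — 6 statements merged into one kernel-verified Lean document; each statement's English description precedes it below -/
import Mathlib

section
/- Let M ∈ {0,1}^{p×q} be a Boolean matrix and v ∈ {0,1}^q a Boolean vector, with p, q ≥ 1. Let T be the binary string of length 3pq defined blockwise by T[3iq+3j .. 3iq+3j+3) = 100 if M[i,j]=0 and T[3iq+3j .. 3iq+3j+3) = 111 if M[i,j]=1, for i ∈ [0..p) and j ∈ [0..q). Let P be the binary string of length 3q defined by P[3j..3j+3) = 001 if v[j]=0 and P[3j..3j+3) = 111 if v[j]=1, for j ∈ [0..q). Then for every i ∈ [0..p): HD(P, T[3iq .. 3iq+3q)) = 2q − 2·|{j ∈ [0..q) : M[i,j]=1 and v[j]=1}|. In particular, HD(P, T[3iq .. 3iq+3q)) < 2q if and only if there exists j with M[i,j]=v[j]=1 (i.e., the i-th entry of the Boolean matrix-vector product Mv equals 1). -/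
/-- Hamming distance between (the length-`m` prefixes of) two strings,
given as functions `ℕ → Bool`. -/
def hd (m : ℕ) (X Y : ℕ → Bool) : ℕ :=
  ((Finset.range m).filter fun i => X i ≠ Y i).card

theorem sum_blocks (f : ℕ → ℕ) (q : ℕ) :
    ∑ t ∈ Finset.range (3*q), f t
      = ∑ j ∈ Finset.range q, (f (3*j) + f (3*j+1) + f (3*j+2)) := by
  induction q with
  | zero => simp
  | succ n ih =>
    have h3 : 3 * (n+1) = (3*n) + 1 + 1 + 1 := by ring
    rw [h3, Finset.sum_range_succ, Finset.sum_range_succ, Finset.sum_range_succ,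
      Finset.sum_range_succ, ih]
    ring

/-- OMv encoding. `T` (of length `3pq`) encodes the matrix `M` blockwise
(block `(i,j)` is `100` if `M[i,j]=0` and `111` if `M[i,j]=1`), and `P` (of length `3q`)
encodes the vector `v` (block `j` is `001` if `v[j]=0` and `111` if `v[j]=1`). Then for
every row `i`, `HD(P, T[3iq..3iq+3q)) = 2q − 2·|{j : M[i,j]=1 ∧ v[j]=1}|`; in particular
the distance is `< 2q` iff `(Mv)[i] = 1`. -/
theorem stmt_2 (p q : ℕ) (hp : 1 ≤ p) (hq : 1 ≤ q)
    (M : Fin p → Fin q → Bool) (v : Fin q → Bool)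
    (T P : ℕ → Bool)
    (hT : ∀ (i : Fin p) (j : Fin q),
      T (3 * (i : ℕ) * q + 3 * (j : ℕ)) = true ∧
      T (3 * (i : ℕ) * q + 3 * (j : ℕ) + 1) = M i j ∧
      T (3 * (i : ℕ) * q + 3 * (j : ℕ) + 2) = M i j)
    (hP : ∀ j : Fin q,
      P (3 * (j : ℕ)) = v j ∧ P (3 * (j : ℕ) + 1) = v j ∧ P (3 * (j : ℕ) + 2) = true)
    (i : Fin p) :
    ((hd (3 * q) P (fun t => T (3 * (i : ℕ) * q + t)) : ℤ)
        = 2 * q - 2 * (Finset.univ.filter fun j : Fin q => M i j = true ∧ v j = true).card)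
    ∧ (hd (3 * q) P (fun t => T (3 * (i : ℕ) * q + t)) < 2 * q ↔
        ∃ j : Fin q, M i j = true ∧ v j = true) := by
  classical
  set c := (Finset.univ.filter fun j : Fin q => M i j = true ∧ v j = true).card with hc
  have key : hd (3*q) P (fun t => T (3*(i:ℕ)*q + t)) + 2*c = 2*q := by
    have hcard : hd (3*q) P (fun t => T (3*(i:ℕ)*q + t))
        = ∑ t ∈ Finset.range (3*q), (if P t ≠ T (3*(i:ℕ)*q + t) then 1 else 0) := by
      simp [hd, Finset.card_filter]
    have hc' : c = ∑ j : Fin q, (if M i j = true ∧ v j = true then 1 else 0) := by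
      rw [hc, Finset.card_filter]
    rw [hcard, sum_blocks, ← Fin.sum_univ_eq_sum_range, hc', Finset.mul_sum,
      ← Finset.sum_add_distrib]
    have hblock : ∀ j : Fin q,
        ((if P (3*(j:ℕ)) ≠ T (3*(i:ℕ)*q + 3*(j:ℕ)) then 1 else 0) +
        (if P (3*(j:ℕ)+1) ≠ T (3*(i:ℕ)*q + (3*(j:ℕ)+1)) then 1 else 0) +
        (if P (3*(j:ℕ)+2) ≠ T (3*(i:ℕ)*q + (3*(j:ℕ)+2)) then 1 else 0)) +
        2 * (if M i j = true ∧ v j = true then 1 else 0) = 2 := by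
      intro j
      obtain ⟨h1, h2, h3⟩ := hT i j
      obtain ⟨p1, p2, p3⟩ := hP j
      have e1 : 3*(i:ℕ)*q + (3*(j:ℕ)+1) = 3*(i:ℕ)*q + 3*(j:ℕ) + 1 := by ring
      have e2 : 3*(i:ℕ)*q + (3*(j:ℕ)+2) = 3*(i:ℕ)*q + 3*(j:ℕ) + 2 := by ring
      rw [e1, e2, h1, h2, h3, p1, p2, p3]
      cases hM : M i j <;> cases hv : v j <;> simp
    rw [Finset.sum_congr rfl (fun j _ => hblock j)]
    simp [Finset.sum_const, Finset.card_univ, mul_comm]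
  constructor
  · have := congrArg (fun n : ℕ => (n : ℤ)) key
    push_cast at this
    linarith
  · constructor
    · intro h
      have hcpos : 0 < c := by omega
      obtain ⟨j, hj⟩ := Finset.card_pos.mp hcpos
      simp only [Finset.mem_filter] at hj
      exact ⟨j, hj.2⟩
    · intro ⟨j, hj⟩
      have hcpos : 0 < c := Finset.card_pos.mpr ⟨j, by simp [hj.1, hj.2]⟩
      omega
end

section
/- Let P be a pattern, T a text, both over an alphabet Σ, and let ρ be a positive integer. Then for every i ∈ ℤ: [T⊗P](i) = Σ_{j=0}^∞ (j+1) · [Σ_{c∈Σ} Δ_ρ[T_c] ∗ Δ_ρ[P_c^R]](i − jρ), where all but finitely many terms of the outer sum are zero. -/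
/-- Characteristic function `X_c : ℤ → ℤ` of the length-`len` string `X` and character `c`:
`X_c(i) = 1` iff `0 ≤ i < len` and `X[i] = c`. -/
def charFun {α : Type*} [DecidableEq α] (len : ℕ) (X : ℕ → α) (c : α) : ℤ → ℤ :=
  fun i => if 0 ≤ i ∧ i < len ∧ X i.toNat = c then 1 else 0

/-- Convolution of (finitely supported) `f, g : ℤ → ℤ`. -/
noncomputable def conv (f g : ℤ → ℤ) : ℤ → ℤ :=
  fun i => ∑ᶠ j : ℤ, f j * g (i - j)

/-- Cross-correlation `T ⊗ P = Σ_{c ∈ Σ} T_c ∗ P_c^R` of a text `T` of length `n`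
and a pattern `P` of length `m`; note `(P^R)_c(j) = P_c(m − 1 − j)`. -/
noncomputable def crossCorr {α : Type*} [Fintype α] [DecidableEq α]
    (m n : ℕ) (T P : ℕ → α) : ℤ → ℤ :=
  fun i => ∑ c : α, conv (charFun n T c) (fun j => charFun m P c ((m : ℤ) - 1 - j)) i

/-- Backward difference of `f : ℤ → ℤ` due to `ρ`: `Δ_ρ[f](i) = f(i) − f(i−ρ)`. -/
def bdiff (ρ : ℕ) (f : ℤ → ℤ) : ℤ → ℤ :=
  fun i => f i - f (i - ρ)

lemma support_term (f g : ℤ → ℤ) (i : ℤ) (hf : (Function.support f).Finite) :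
    (Function.support (fun j => f j * g (i - j))).Finite := by
  apply hf.subset
  intro j hj
  simp only [Function.mem_support] at hj ⊢
  intro h; apply hj; rw [h, zero_mul]

lemma conv_shift_right (f g : ℤ → ℤ) (ρ i : ℤ) :
    conv f (fun x => g (x - ρ)) i = conv f g (i - ρ) :=
  finsum_congr fun j => by rw [sub_right_comm]

lemma conv_shift_left (f g : ℤ → ℤ) (ρ i : ℤ) :
    conv (fun x => f (x - ρ)) g i = conv f g (i - ρ) := by
  unfold conv
  rw [← finsum_comp_equiv (Equiv.addRight ρ) (f := fun j => f (j - ρ) * g (i - j))]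
  refine finsum_congr fun k => ?_
  simp only [Equiv.coe_addRight, add_sub_cancel_right]
  ring_nf

lemma support_shift (f : ℤ → ℤ) (ρ : ℤ) (hf : (Function.support f).Finite) :
    (Function.support (fun x : ℤ => f (x - ρ))).Finite := by
  apply ((hf.image (fun x => x + ρ))).subset
  intro j hj
  exact ⟨j - ρ, hj, by ring⟩

lemma conv_bdiff_left (f g : ℤ → ℤ) (hf : (Function.support f).Finite) (ρ : ℕ) (i : ℤ) :
    conv (bdiff ρ f) g i = conv f g i - conv f g (i - ρ) := by
  calc conv (bdiff ρ f) g i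
      = ∑ᶠ j : ℤ, (f j * g (i - j) - f (j - ρ) * g (i - j)) :=
        finsum_congr fun j => by show (f j - f (j - ρ)) * g (i - j) = _; ring
    _ = (∑ᶠ j : ℤ, f j * g (i - j)) - ∑ᶠ j : ℤ, f (j - ρ) * g (i - j) :=
        finsum_sub_distrib (support_term f g i hf)
          (support_term (fun x => f (x - ρ)) g i (support_shift f ρ hf))
    _ = conv f g i - conv f g (i - ρ) := by rw [← conv_shift_left f g ρ i]; rfl

lemma conv_bdiff_right (f g : ℤ → ℤ) (hf : (Function.support f).Finite) (ρ : ℕ) (i : ℤ) :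
    conv f (bdiff ρ g) i = conv f g i - conv f g (i - ρ) := by
  calc conv f (bdiff ρ g) i
      = ∑ᶠ j : ℤ, (f j * g (i - j) - f j * g (i - j - ρ)) :=
        finsum_congr fun j => by show f j * (g (i - j) - g (i - j - ρ)) = _; ring
    _ = (∑ᶠ j : ℤ, f j * g (i - j)) - ∑ᶠ j : ℤ, f j * g (i - j - ρ) :=
        finsum_sub_distrib (support_term f g i hf)
          (support_term f (fun x => g (x - ρ)) i hf)
    _ = conv f g i - conv f g (i - ρ) := by rw [← conv_shift_right f g ρ i]; rfl

lemma support_bdiff (f : ℤ → ℤ) (ρ : ℕ) (hf : (Function.support f).Finite) :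
    (Function.support (bdiff ρ f)).Finite := by
  apply (hf.union (hf.image (fun x => x + (ρ:ℤ)))).subset
  intro j hj
  simp only [Function.mem_support, bdiff] at hj
  by_cases h : f j = 0
  · right; exact ⟨j - ρ, by simpa [h] using hj, by ring⟩
  · left; exact h

lemma conv_bdiff_bdiff (f g : ℤ → ℤ) (hf : (Function.support f).Finite) (ρ : ℕ) (i : ℤ) :
    conv (bdiff ρ f) (bdiff ρ g) i
      = conv f g i - 2 * conv f g (i - ρ) + conv f g (i - 2 * ρ) := by
  rw [conv_bdiff_right (bdiff ρ f) g (support_bdiff f ρ hf) ρ i,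
    conv_bdiff_left f g hf ρ i, conv_bdiff_left f g hf ρ (i - ρ)]
  have : i - (ρ:ℤ) - ρ = i - 2 * ρ := by ring
  rw [this]; ring

lemma conv_zero_of_neg (f g : ℤ → ℤ) (hf : ∀ j < (0:ℤ), f j = 0)
    (hg : ∀ j < (0:ℤ), g j = 0) (x : ℤ) (hx : x < 0) : conv f g x = 0 := by
  have h : ∀ j : ℤ, f j * g (x - j) = 0 := by
    intro j
    by_cases h : j < 0
    · rw [hf j h, zero_mul]
    · rw [hg (x - j) (by omega), mul_zero]
  simp only [conv, h, finsum_zero]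

lemma charFun_support_finite {α : Type*} [DecidableEq α] (len : ℕ) (X : ℕ → α) (c : α) :
    (Function.support (charFun len X c)).Finite := by
  apply (Set.finite_Icc (0:ℤ) len).subset
  intro j hj
  simp only [Function.mem_support, charFun] at hj
  split_ifs at hj with h
  · exact Set.mem_Icc.mpr ⟨h.1, le_of_lt h.2.1⟩
  · exact absurd rfl hj

lemma tele (G : ℕ → ℤ) (N : ℕ) :
    ∑ j ∈ Finset.range N, ((j:ℤ)+1) * (G j - 2 * G (j+1) + G (j+2))
      = G 0 - ((N:ℤ)+1) * G N + (N:ℤ) * G (N+1) := by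
  induction N with
  | zero => simp
  | succ N ih => rw [Finset.sum_range_succ, ih]; push_cast; ring

/-- for every `i ∈ ℤ`,
`[T⊗P](i) = Σ_{j=0}^∞ (j+1) · [Σ_{c∈Σ} Δ_ρ[T_c] ∗ Δ_ρ[P_c^R]](i − jρ)`
(all but finitely many terms vanish; the sum is a `finsum`). -/
theorem stmt_9 {α : Type*} [Fintype α] [DecidableEq α] (m n : ℕ)
    (P T : ℕ → α) (ρ : ℕ) (hρ : 1 ≤ ρ) (i : ℤ) :
    crossCorr m n T P i =
      ∑ᶠ j : ℕ, ((j : ℤ) + 1) *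
        (∑ c : α, conv (bdiff ρ (charFun n T c))
          (bdiff ρ (fun x => charFun m P c ((m : ℤ) - 1 - x))) (i - (j : ℤ) * ρ)) := by
  set F : ℤ → ℤ := fun x =>
    ∑ c : α, conv (charFun n T c) (fun j => charFun m P c ((m : ℤ) - 1 - j)) x with hFdef
  -- the bdiff-sum in terms of F
  have hH : ∀ x : ℤ,
      (∑ c : α, conv (bdiff ρ (charFun n T c))
        (bdiff ρ (fun j => charFun m P c ((m : ℤ) - 1 - j))) x)
      = F x - 2 * F (x - ρ) + F (x - 2 * ρ) := by
    intro x
    have : ∀ c : α, conv (bdiff ρ (charFun n T c))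
        (bdiff ρ (fun j => charFun m P c ((m : ℤ) - 1 - j))) x
        = conv (charFun n T c) (fun j => charFun m P c ((m : ℤ) - 1 - j)) x
          - 2 * conv (charFun n T c) (fun j => charFun m P c ((m : ℤ) - 1 - j)) (x - ρ)
          + conv (charFun n T c) (fun j => charFun m P c ((m : ℤ) - 1 - j)) (x - 2 * ρ) :=
      fun c => conv_bdiff_bdiff _ _ (charFun_support_finite n T c) ρ x
    rw [Finset.sum_congr rfl fun c _ => this c]
    simp [hFdef, Finset.sum_add_distrib, Finset.sum_sub_distrib, Finset.mul_sum]
  -- F vanishes on negatives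
  have hF0 : ∀ x : ℤ, x < 0 → F x = 0 := by
    intro x hx
    apply Finset.sum_eq_zero
    intro c _
    apply conv_zero_of_neg
    · intro j hj
      simp only [charFun]
      exact if_neg fun h => absurd h.1 (by omega)
    · intro j hj
      simp only [charFun]
      exact if_neg fun h => absurd h.2.1 (by omega)
    · exact hx
  have hcc : crossCorr m n T P i = F i := rfl
  set N : ℕ := i.toNat + 1 with hN
  have hneg : ∀ j : ℕ, N ≤ j → i - (j:ℤ) * ρ < 0 := by
    intro j hj
    have h1 : (i:ℤ) < (N:ℤ) := by
      have := Int.self_le_toNat i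
      simp only [hN]
      push_cast
      omega
    have h2 : (N:ℤ) ≤ (j:ℤ) := by exact_mod_cast hj
    have h3 : (j:ℤ) ≤ (j:ℤ) * ρ := by
      nlinarith [Int.ofNat_nonneg j, (by exact_mod_cast hρ : (1:ℤ) ≤ (ρ:ℤ))]
    omega
  set G : ℕ → ℤ := fun j => F (i - (j:ℤ) * ρ) with hG
  have hterm : ∀ j : ℕ,
      ((j : ℤ) + 1) * (∑ c : α, conv (bdiff ρ (charFun n T c))
        (bdiff ρ (fun x => charFun m P c ((m : ℤ) - 1 - x))) (i - (j : ℤ) * ρ))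
      = ((j:ℤ)+1) * (G j - 2 * G (j+1) + G (j+2)) := by
    intro j
    rw [hH (i - (j:ℤ) * ρ)]
    have e1 : i - (j:ℤ) * ρ - ρ = i - ((j:ℕ)+1+0:ℤ) * ρ := by push_cast; ring
    have e2 : i - (j:ℤ) * ρ - 2 * ρ = i - ((j:ℕ)+1+1:ℤ) * ρ := by push_cast; ring
    simp only [hG]
    push_cast
    rw [e1, e2]
    ring_nf
  rw [finsum_congr hterm]
  have hsupp : (Function.support fun j : ℕ => ((j:ℤ)+1) * (G j - 2 * G (j+1) + G (j+2)))
      ⊆ ↑(Finset.range N) := by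
    intro j hj
    simp only [Finset.coe_range, Set.mem_Iio]
    by_contra h
    push_neg at h
    apply hj
    have z1 : G j = 0 := hF0 _ (hneg j h)
    have z2 : G (j+1) = 0 := hF0 _ (hneg (j+1) (by omega))
    have z3 : G (j+2) = 0 := hF0 _ (hneg (j+2) (by omega))
    simp [z1, z2, z3]
  rw [finsum_eq_sum_of_support_subset _ hsupp, tele G N, hcc]
  have zN : G N = 0 := hF0 _ (hneg N le_rfl)
  have zN1 : G (N+1) = 0 := hF0 _ (hneg (N+1) (by omega))
  have g0 : G 0 = F i := by simp [hG]
  rw [zN, zN1, g0]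
  ring
end

section
/- Let g ≥ 1 and, for each i ∈ [1..g], let A_i, B_i, C_i be finite non-empty sets of integers such that max A_i < min A_{i'}, max B_i < min B_{i'}, and max C_i < min C_{i'} hold whenever i < i'. Define T = {(i,j,k) ∈ [1..g]^3 : min A_i + min B_j + min C_k ≤ 0 ≤ max A_i + max B_j + max C_k}. Then T is an antichain with respect to the strict domination order ≺, i.e., no two distinct elements of T are ≺-comparable. -/
/-- if the blocks `A_1, …, A_g` (and likewise `B`, `C`) are increasing,
i.e. `max A_i < min A_{i'}` whenever `i < i'`, then the set
`T = {(i,j,k) ∈ [1..g]³ : min A_i + min B_j + min C_k ≤ 0 ≤ max A_i + max B_j + max C_k}`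
is an antichain for the strict domination order: no triple of `T` strictly dominates
another triple of `T` in all three coordinates. -/
theorem stmt_15 (g : ℕ) (hg : 1 ≤ g) (A B C : ℕ → Finset ℤ)
    (hA : ∀ i ∈ Finset.Icc 1 g, (A i).Nonempty)
    (hB : ∀ i ∈ Finset.Icc 1 g, (B i).Nonempty)
    (hC : ∀ i ∈ Finset.Icc 1 g, (C i).Nonempty)
    (hAord : ∀ i, ∀ hi : i ∈ Finset.Icc 1 g, ∀ i', ∀ hi' : i' ∈ Finset.Icc 1 g,
      i < i' → (A i).max' (hA i hi) < (A i').min' (hA i' hi'))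
    (hBord : ∀ i, ∀ hi : i ∈ Finset.Icc 1 g, ∀ i', ∀ hi' : i' ∈ Finset.Icc 1 g,
      i < i' → (B i).max' (hB i hi) < (B i').min' (hB i' hi'))
    (hCord : ∀ i, ∀ hi : i ∈ Finset.Icc 1 g, ∀ i', ∀ hi' : i' ∈ Finset.Icc 1 g,
      i < i' → (C i).max' (hC i hi) < (C i').min' (hC i' hi'))
    (i j k i' j' k' : ℕ)
    (hi : i ∈ Finset.Icc 1 g) (hj : j ∈ Finset.Icc 1 g) (hk : k ∈ Finset.Icc 1 g)
    (hi' : i' ∈ Finset.Icc 1 g) (hj' : j' ∈ Finset.Icc 1 g) (hk' : k' ∈ Finset.Icc 1 g)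
    (hmem : (A i).min' (hA i hi) + (B j).min' (hB j hj) + (C k).min' (hC k hk) ≤ 0 ∧
      0 ≤ (A i).max' (hA i hi) + (B j).max' (hB j hj) + (C k).max' (hC k hk))
    (hmem' : (A i').min' (hA i' hi') + (B j').min' (hB j' hj')
        + (C k').min' (hC k' hk') ≤ 0 ∧
      0 ≤ (A i').max' (hA i' hi') + (B j').max' (hB j' hj')
        + (C k').max' (hC k' hk')) :
    ¬ (i < i' ∧ j < j' ∧ k < k') := by
  rintro ⟨h1, h2, h3⟩
  have hA' := hAord i hi i' hi' h1
  have hB' := hBord j hj j' hj' h2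
  have hC' := hCord k hk k' hk' h3
  linarith [hmem.2, hmem'.1]
end

section
/- Let v ≥ u ≥ 1 be integers and let α ∈ [0..2^v) be an odd integer; define h : ℤ → [0..2^u) by h(x) = ⌊(αx mod 2^v)/2^{v−u}⌋, where (αx mod 2^v) denotes the representative in [0..2^v). Then for all integers a, b, c: (h(a)+h(b)+h(c)−h(a+b+c)) mod 2^u ∈ {0, 2^u−1, 2^u−2} (equivalently, h(a)+h(b)+h(c)−h(a+b+c) is congruent to 0, −1, or −2 modulo 2^u). -/
/-- The hash function `h(x) = ⌊(αx mod 2^v) / 2^(v−u)⌋`, where `x mod 2^v` is the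
representative in `[0..2^v)` (integer `emod`) and the division is floor division of
a non-negative integer. -/
def hfun (u v : ℕ) (α : ℤ) : ℤ → ℤ :=
  fun x => (α * x % 2 ^ v) / 2 ^ (v - u)

/-- for `v ≥ u ≥ 1` and odd `α ∈ [0..2^v)`, for all integers `a, b, c`,
`(h(a)+h(b)+h(c)−h(a+b+c)) mod 2^u ∈ {0, 2^u−1, 2^u−2}`. -/
theorem stmt_17 (u v : ℕ) (hu : 1 ≤ u) (huv : u ≤ v)
    (α : ℤ) (hodd : Odd α) (hα0 : 0 ≤ α) (hαv : α < 2 ^ v)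
    (a b c : ℤ) :
    (hfun u v α a + hfun u v α b + hfun u v α c - hfun u v α (a + b + c)) % 2 ^ u
      ∈ ({0, 2 ^ u - 1, 2 ^ u - 2} : Set ℤ) := by
  have hM0 : (0:ℤ) < 2 ^ v := by positivity
  have hm0 : (0:ℤ) < 2 ^ (v - u) := by positivity
  have hu2 : (2:ℤ) ≤ 2 ^ u := by
    calc (2:ℤ) = 2 ^ 1 := (pow_one 2).symm
    _ ≤ 2 ^ u := pow_le_pow_right₀ (by norm_num) hu
  set M : ℤ := 2 ^ v with hMdef
  set m : ℤ := 2 ^ (v - u) with hmdef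
  have hmM : M = m * 2 ^ u := by
    rw [hMdef, hmdef, ← pow_add]
    congr 1
    omega
  set fa := α * a % M with hfa
  set fb := α * b % M with hfb
  set fc := α * c % M with hfc
  set fs := α * (a + b + c) % M with hfs
  -- divisibility
  have hdvd : M ∣ (fa + fb + fc - fs) := by
    have h1 : fa ≡ α * a [ZMOD M] := Int.emod_emod_of_dvd _ dvd_rfl
    have h2 : fb ≡ α * b [ZMOD M] := Int.emod_emod_of_dvd _ dvd_rfl
    have h3 : fc ≡ α * c [ZMOD M] := Int.emod_emod_of_dvd _ dvd_rfl
    have h4 : fs ≡ α * (a + b + c) [ZMOD M] := Int.emod_emod_of_dvd _ dvd_rfl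
    have h5 : fa + fb + fc - fs ≡ α * a + α * b + α * c - α * (a + b + c) [ZMOD M] :=
      ((h1.add h2).add h3).sub h4
    have h6 : α * a + α * b + α * c - α * (a + b + c) = 0 := by ring
    rw [h6] at h5
    exact (Int.modEq_zero_iff_dvd).mp h5
  obtain ⟨k, hk⟩ := hdvd
  set ra := fa % m with hra
  set rb := fb % m with hrb
  set rc := fc % m with hrc
  set rs := fs % m with hrs
  have era : fa = m * (fa / m) + ra := (Int.mul_ediv_add_emod fa m).symm
  have erb : fb = m * (fb / m) + rb := (Int.mul_ediv_add_emod fb m).symm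
  have erc : fc = m * (fc / m) + rc := (Int.mul_ediv_add_emod fc m).symm
  have ers : fs = m * (fs / m) + rs := (Int.mul_ediv_add_emod fs m).symm
  have bra : 0 ≤ ra := Int.emod_nonneg _ (ne_of_gt hm0)
  have brb : 0 ≤ rb := Int.emod_nonneg _ (ne_of_gt hm0)
  have brc : 0 ≤ rc := Int.emod_nonneg _ (ne_of_gt hm0)
  have brs : 0 ≤ rs := Int.emod_nonneg _ (ne_of_gt hm0)
  have bra' : ra < m := Int.emod_lt_of_pos _ hm0
  have brb' : rb < m := Int.emod_lt_of_pos _ hm0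
  have brc' : rc < m := Int.emod_lt_of_pos _ hm0
  have brs' : rs < m := Int.emod_lt_of_pos _ hm0
  set D := hfun u v α a + hfun u v α b + hfun u v α c - hfun u v α (a + b + c) with hD
  have hDeq : D = fa / m + fb / m + fc / m - fs / m := by
    simp only [hD, hfun, ← hMdef, ← hmdef, ← hfa, ← hfb, ← hfc, ← hfs]
  set t := D - k * 2 ^ u with ht
  have hmt : m * t = rs - ra - rb - rc := by
    have : m * D = (fa + fb + fc - fs) - (ra + rb + rc - rs) := by
      rw [hDeq]; linarith [era, erb, erc, ers]
    rw [ht, mul_sub, this, hk]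
    rw [hmM]; ring
  have ht2 : t = 0 ∨ t = -1 ∨ t = -2 := by
    have h1 : m * t < m * 1 := by rw [hmt]; linarith
    have h2 : m * (-3) < m * t := by rw [hmt]; linarith
    have h1' : t < 1 := lt_of_mul_lt_mul_left h1 (le_of_lt hm0)
    have h2' : -3 < t := lt_of_mul_lt_mul_left h2 (le_of_lt hm0)
    omega
  have hDmod : D % 2 ^ u = t % 2 ^ u := by
    have : D = t + 2 ^ u * k := by rw [ht]; ring
    rw [this, Int.add_mul_emod_self_left]
  have hshift : ∀ s : ℤ, s % 2 ^ u = (s + 2 ^ u * 1) % 2 ^ u :=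
    fun s => (Int.add_mul_emod_self_left s (2 ^ u) 1).symm
  simp only [Set.mem_insert_iff, Set.mem_singleton_iff]
  rw [hDmod]
  rcases ht2 with h | h | h
  · left; simp [h]
  · right; left
    rw [h, hshift]
    have e : (-1 : ℤ) + 2 ^ u * 1 = 2 ^ u - 1 := by ring
    rw [e, Int.emod_eq_of_lt (by linarith) (by linarith)]
  · right; right
    rw [h, hshift]
    have e : (-2 : ℤ) + 2 ^ u * 1 = 2 ^ u - 2 := by ring
    rw [e, Int.emod_eq_of_lt (by linarith) (by linarith)]
end

section
/- Let v ≥ u ≥ 2 be integers and let α ∈ [0..2^v) be an odd integer; define h : ℤ → [0..2^u) by h(x) = ⌊(αx mod 2^v)/2^{v−u}⌋, where (αx mod 2^v) denotes the representative in [0..2^v). Then for all integers a, b, c with a+b+c = 0: h(a)+h(b)+h(c) ∈ {0, 2^u−2, 2^u−1, 2^u, 2·2^u−2, 2·2^u−1, 2·2^u}. -/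
namespace Int

theorem emod_add_emod_add_emod_eq_mul {m x y z : ℤ} (hm : 0 < m) (h : m ∣ x + y + z) :
    ∃ k, 0 ≤ k ∧ k ≤ 2 ∧ x % m + y % m + z % m = m * k := by
  have hdvd : m ∣ x % m + y % m + z % m := by
    rw [dvd_iff_emod_eq_zero] at h ⊢
    simpa [add_emod] using h
  obtain ⟨k, hk⟩ := hdvd
  have hx := emod_lt_of_pos x hm
  have hy := emod_lt_of_pos y hm
  have hz := emod_lt_of_pos z hm
  have hx0 := emod_nonneg x hm.ne'
  have hy0 := emod_nonneg y hm.ne'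
  have hz0 := emod_nonneg z hm.ne'
  refine ⟨k, ?_, ?_, hk⟩
  · by_contra! hneg
    nlinarith
  · by_contra! hbig
    nlinarith

theorem ediv_add_ediv_add_ediv_eq_sub {m x y z : ℤ} (hm : 0 < m) (h : m ∣ x + y + z) :
    ∃ t, 0 ≤ t ∧ t ≤ 2 ∧ x / m + y / m + z / m = (x + y + z) / m - t := by
  obtain ⟨t, ht0, ht2, ht⟩ := emod_add_emod_add_emod_eq_mul hm h
  refine ⟨t, ht0, ht2, ?_⟩
  have hsum : x + y + z = m * (x / m + y / m + z / m + t) := by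
    linarith [mul_ediv_add_emod x m, mul_ediv_add_emod y m, mul_ediv_add_emod z m]
  rw [hsum, mul_ediv_cancel_left _ hm.ne']
  ring

end Int

theorem hfun_add_add_eq {u v : ℕ} (huv : u ≤ v) (α : ℤ) {a b c : ℤ} (habc : a + b + c = 0) :
    ∃ k t, 0 ≤ k ∧ k ≤ 2 ∧ 0 ≤ t ∧ t ≤ 2 ∧
      hfun u v α a + hfun u v α b + hfun u v α c = 2 ^ u * k - t := by
  have hpow : (2 : ℤ) ^ v = 2 ^ (v - u) * 2 ^ u := by
    rw [← pow_add, Nat.sub_add_cancel huv]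
  obtain ⟨k, hk0, hk2, hk⟩ := Int.emod_add_emod_add_emod_eq_mul (x := α * a) (y := α * b)
    (z := α * c) (m := 2 ^ v) (by positivity) ⟨0, by linear_combination α * habc⟩
  obtain ⟨t, ht0, ht2, ht⟩ := Int.ediv_add_ediv_add_ediv_eq_sub (m := 2 ^ (v - u))
    (x := α * a % 2 ^ v) (y := α * b % 2 ^ v) (z := α * c % 2 ^ v) (by positivity)
    ⟨2 ^ u * k, by rw [hk, hpow, mul_assoc]⟩
  refine ⟨k, t, hk0, hk2, ht0, ht2, ?_⟩
  simp only [hfun]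
  rw [ht, hk, hpow, mul_assoc, Int.mul_ediv_cancel_left _ (by positivity)]

theorem hfun_nonneg (u v : ℕ) (α x : ℤ) : 0 ≤ hfun u v α x :=
  Int.ediv_nonneg (Int.emod_nonneg _ (by positivity)) (by positivity)

theorem stmt_18_general (u v : ℕ) (huv : u ≤ v)
    (α : ℤ)
    (a b c : ℤ) (habc : a + b + c = 0) :
    hfun u v α a + hfun u v α b + hfun u v α c
      ∈ ({0, 2 ^ u - 2, 2 ^ u - 1, 2 ^ u,
          2 * 2 ^ u - 2, 2 * 2 ^ u - 1, 2 * 2 ^ u} : Set ℤ) := by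
  obtain ⟨k, t, hk0, hk2, ht0, ht2, hsum⟩ := hfun_add_add_eq huv α habc
  have hnonneg := add_nonneg (add_nonneg (hfun_nonneg u v α a) (hfun_nonneg u v α b))
    (hfun_nonneg u v α c)
  rw [hsum] at hnonneg ⊢
  simp only [Set.mem_insert_iff, Set.mem_singleton_iff]
  interval_cases k <;> interval_cases t <;> omega

/-- for `v ≥ u ≥ 2` and odd `α ∈ [0..2^v)`, for all integers `a, b, c`
with `a+b+c = 0`,
`h(a)+h(b)+h(c) ∈ {0, 2^u−2, 2^u−1, 2^u, 2·2^u−2, 2·2^u−1, 2·2^u}`. -/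
theorem stmt_18 (u v : ℕ) (hu : 2 ≤ u) (huv : u ≤ v)
    (α : ℤ) (hodd : Odd α) (hα0 : 0 ≤ α) (hαv : α < 2 ^ v)
    (a b c : ℤ) (habc : a + b + c = 0) :
    hfun u v α a + hfun u v α b + hfun u v α c
      ∈ ({0, 2 ^ u - 2, 2 ^ u - 1, 2 ^ u,
          2 * 2 ^ u - 2, 2 * 2 ^ u - 1, 2 * 2 ^ u} : Set ℤ) :=
  stmt_18_general u v huv α a b c habc
end

section
/- Let v ≥ u ≥ 3 be integers and let x be an integer that is not divisible by 2^v. For an odd integer α ∈ [0..2^v), define h_α(x) = ⌊(αx mod 2^v)/2^{v−u}⌋, where (αx mod 2^v) denotes the representative in [0..2^v). Then the number of odd α ∈ [0..2^v) such that h_α(x) ∈ {0, 1, 2, 2^u−2, 2^u−1} is at most 2^{v−u+2}. Equivalently, if α is chosen uniformly at random among the 2^{v−1} odd integers in [0..2^v), then Pr[h_α(x) ∈ {0, 1, 2, 2^u−2, 2^u−1}] ≤ 8/2^u. -/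
open Finset

theorem card_filter_mod_le (a b : ℕ) (Q : ℕ → Prop) [DecidablePred Q] :
    #{x ∈ range (a * b) | Q (x % b)} ≤ a * #{y ∈ range b | Q y} := by
  calc #{x ∈ range (a * b) | Q (x % b)}
      ≤ #(range a ×ˢ {y ∈ range b | Q y}) := by
        refine card_le_card_of_injOn (fun x => (x / b, x % b)) ?_ ?_
        · intro x hx
          simp only [coe_filter, mem_range, Set.mem_ofPred_eq, coe_product, coe_range,
            Set.mem_prod, Set.mem_Iio] at hx ⊢
          have hb : 0 < b := Nat.pos_of_ne_zero (by rintro rfl; simp at hx)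
          exact ⟨Nat.div_lt_of_lt_mul (by linarith [hx.1]), Nat.mod_lt x hb, hx.2⟩
        · intro x _ y _ hxy
          simp only [Prod.mk.injEq] at hxy
          rw [← Nat.div_add_mod x b, ← Nat.div_add_mod y b, hxy.1, hxy.2]
    _ = a * #{y ∈ range b | Q y} := by rw [card_product, card_range]

theorem card_filter_mul_mod_le {m n : ℕ} (hm : m.Coprime n) (Q : ℕ → Prop) [DecidablePred Q] :
    #{a ∈ range n | Q (a * m % n)} ≤ #{b ∈ range n | Q b} := by
  refine card_le_card_of_injOn (fun a => a * m % n) ?_ ?_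
  · intro a ha
    simp only [coe_filter, mem_range, Set.mem_ofPred_eq] at ha ⊢
    exact ⟨Nat.mod_lt _ (by omega), ha.2⟩
  · intro a ha b hb hab
    simp only [coe_filter, mem_range, Set.mem_ofPred_eq] at ha hb
    exact (Nat.ModEq.cancel_right_of_coprime (Nat.coprime_comm.mp hm) hab).eq_of_lt_of_lt ha.1 hb.1

theorem card_odd_mul_lt_le (n d A : ℕ) (hd : 0 < d) :
    #{k ∈ range n | Odd k ∧ d * k < A} ≤ (A + d - 1) / (2 * d) := by
  rw [← card_range ((A + d - 1) / (2 * d))]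
  refine card_le_card_of_injOn (· / 2) ?_ ?_
  · rintro k hk
    simp only [coe_filter, mem_range, Set.mem_ofPred_eq, coe_range, Set.mem_Iio] at hk ⊢
    obtain ⟨-, ⟨j, rfl⟩, hA⟩ := hk
    rw [show (2 * j + 1) / 2 = j by omega, Nat.lt_iff_add_one_le, Nat.le_div_iff_mul_le (by omega)]
    have : (j + 1) * (2 * d) = d * (2 * j + 1) + d := by ring
    omega
  · intro k hk l hl hkl
    simp only [coe_filter, mem_range, Set.mem_ofPred_eq, Nat.odd_iff] at hk hl hkl
    omega

theorem card_odd_mul_ge_le (N d B : ℕ) (hN : Even N) (hd : 0 < d) :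
    #{k ∈ range N | Odd k ∧ d * N ≤ d * k + B} ≤ (B + d) / (2 * d) := by
  calc #{k ∈ range N | Odd k ∧ d * N ≤ d * k + B}
      ≤ #{k ∈ range (N + 1) | Odd k ∧ d * k < B + 1} := by
        refine card_le_card_of_injOn (N - ·) ?_ ?_
        · intro k hk
          simp only [coe_filter, mem_range, Set.mem_ofPred_eq, Nat.odd_iff] at hk ⊢
          have := Nat.even_iff.mp hN
          refine ⟨by omega, by omega, ?_⟩
          rw [Nat.mul_sub]
          omega
        · intro k hk l hl hkl
          simp only [coe_filter, mem_range, Set.mem_ofPred_eq] at hk hl hkl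
          omega
    _ ≤ (B + d) / (2 * d) := by
        simpa using card_odd_mul_lt_le (N + 1) d (B + 1) hd

theorem two_pow_le_or_eq_or_le (s t : ℕ) :
    2 ^ s ≤ 2 ^ t ∨ 2 ^ s = 2 * 2 ^ t ∨ 4 * 2 ^ t ≤ 2 ^ s := by
  rcases le_or_gt s t with h | h
  · exact .inl (Nat.pow_le_pow_right two_pos h)
  rcases Nat.lt_or_ge s (t + 2) with h' | h'
  · obtain rfl : s = t + 1 := by omega
    exact .inr (.inl (pow_succ' 2 t))
  · refine .inr (.inr ?_)
    calc 4 * 2 ^ t = 2 ^ (t + 2) := by ring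
      _ ≤ 2 ^ s := Nat.pow_le_pow_right two_pos h'

-- `S` times the number of odd multiples of `S` in `[0, 3T)` and in `(0, 2T]`, cf. `card_odd_mul_lt_le`.
theorem mul_div_add_div_le {S T : ℕ} (hS : 0 < S) (h : S ≤ T ∨ S = 2 * T ∨ 4 * T ≤ S) :
    S * ((3 * T + S - 1) / (2 * S) + (2 * T + S) / (2 * S)) ≤ 4 * T := by
  set q₁ := (3 * T + S - 1) / (2 * S)
  set q₂ := (2 * T + S) / (2 * S)
  rcases h with h | rfl | h
  · have h₁ : q₁ * (2 * S) ≤ 3 * T + S - 1 := Nat.div_mul_le_self _ _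
    have h₂ : q₂ * (2 * S) ≤ 2 * T + S := Nat.div_mul_le_self _ _
    have : S * (q₁ + q₂) * 2 = q₁ * (2 * S) + q₂ * (2 * S) := by ring
    omega
  · have h₁ : q₁ < 2 := Nat.div_lt_of_lt_mul (by omega)
    have h₂ : q₂ < 2 := Nat.div_lt_of_lt_mul (by omega)
    calc 2 * T * (q₁ + q₂) ≤ 2 * T * 2 := Nat.mul_le_mul_left _ (by omega)
      _ = 4 * T := by ring
  · have h₁ : q₁ = 0 := Nat.div_eq_of_lt (by omega)
    have h₂ : q₂ = 0 := Nat.div_eq_of_lt (by omega)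
    simp [h₁, h₂]

/-- `r` lies in the window `[-2T, 3T)` modulo `N`. -/
def IsNearZero (N T r : ℕ) : Prop := r < 3 * T ∨ N ≤ r + 2 * T

instance (N T : ℕ) : DecidablePred (IsNearZero N T) := fun _ => instDecidableOr

theorem card_odd_isNearZero_le (s t w : ℕ) (hw : w ≠ 0) :
    2 ^ s * #{k ∈ range (2 ^ w) | Odd k ∧ IsNearZero (2 ^ s * 2 ^ w) (2 ^ t) (2 ^ s * k)}
      ≤ 4 * 2 ^ t := by
  have hsplit : #{k ∈ range (2 ^ w) | Odd k ∧ IsNearZero (2 ^ s * 2 ^ w) (2 ^ t) (2 ^ s * k)}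
      ≤ #{k ∈ range (2 ^ w) | Odd k ∧ 2 ^ s * k < 3 * 2 ^ t}
        + #{k ∈ range (2 ^ w) | Odd k ∧ 2 ^ s * 2 ^ w ≤ 2 ^ s * k + 2 * 2 ^ t} := by
    simp only [IsNearZero, and_or_left, filter_or]
    exact card_union_le _ _
  have hlow := card_odd_mul_lt_le (2 ^ w) (2 ^ s) (3 * 2 ^ t) (by positivity)
  have hhigh := card_odd_mul_ge_le (2 ^ w) (2 ^ s) (2 * 2 ^ t)
    (Nat.even_pow.mpr ⟨even_two, hw⟩) (by positivity)
  calc _ ≤ 2 ^ s * ((3 * 2 ^ t + 2 ^ s - 1) / (2 * 2 ^ s) + (2 * 2 ^ t + 2 ^ s) / (2 * 2 ^ s)) :=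
        Nat.mul_le_mul_left _ (hsplit.trans (add_le_add hlow hhigh))
    _ ≤ 4 * 2 ^ t := mul_div_add_div_le (by positivity) (two_pow_le_or_eq_or_le s t)

theorem odd_mul_mod_two_pow_iff {a m w : ℕ} (hm : Odd m) (hw : w ≠ 0) :
    Odd (a * m % 2 ^ w) ↔ Odd a := by
  rw [Nat.odd_iff, Nat.odd_iff, Nat.mod_mod_of_dvd _ (dvd_pow_self 2 hw), Nat.mul_mod,
    Nat.odd_iff.mp hm, mul_one, Nat.mod_mod]

theorem hfun_emod (u v : ℕ) (α x : ℤ) : hfun u v α (x % 2 ^ v) = hfun u v α x := by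
  simp only [hfun]
  rw [Int.mul_emod, Int.emod_emod_of_dvd _ dvd_rfl, ← Int.mul_emod]

theorem hfun_natCast (u v α y : ℕ) :
    hfun u v α y = ((α * y % 2 ^ v / 2 ^ (v - u) : ℕ) : ℤ) := by
  simp [hfun]

theorem hfun_mem_iff {u v : ℕ} (hu : 3 ≤ u) (huv : u ≤ v) (α y : ℕ) :
    hfun u v α y ∈ ({0, 1, 2, 2 ^ u - 2, 2 ^ u - 1} : Set ℤ)
      ↔ IsNearZero (2 ^ v) (2 ^ (v - u)) (α * y % 2 ^ v) := by
  have hT : 0 < 2 ^ (v - u) := by positivity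
  have hv : 2 ^ v = 2 ^ u * 2 ^ (v - u) := by rw [← pow_add, Nat.add_sub_cancel' huv]
  set r := α * y % 2 ^ v
  have hlt : r / 2 ^ (v - u) < 2 ^ u :=
    Nat.div_lt_of_lt_mul (by rw [mul_comm, ← hv]; exact Nat.mod_lt _ (by positivity))
  have hlow : r / 2 ^ (v - u) < 3 ↔ r < 3 * 2 ^ (v - u) := Nat.div_lt_iff_lt_mul hT
  have hhigh : 2 ^ u ≤ r / 2 ^ (v - u) + 2 ↔ 2 ^ v ≤ r + 2 * 2 ^ (v - u) := by
    rw [← Nat.add_mul_div_right _ _ hT, Nat.le_div_iff_mul_le hT, hv, mul_comm 2]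
  have h8 : 8 ≤ 2 ^ u := by
    calc 8 = 2 ^ 3 := by norm_num
      _ ≤ 2 ^ u := Nat.pow_le_pow_right two_pos hu
  have hcast : (2 : ℤ) ^ u = ((2 ^ u : ℕ) : ℤ) := by push_cast; rfl
  rw [hfun_natCast, IsNearZero, ← hlow, ← hhigh, hcast]
  generalize r / 2 ^ (v - u) = n at *
  generalize 2 ^ u = U at *
  simp only [Set.mem_insert_iff, Set.mem_singleton_iff]
  omega

theorem card_odd_isNearZero_mul_le {v y : ℕ} (t : ℕ) (hy : ¬ 2 ^ v ∣ y) :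
    #{α ∈ range (2 ^ v) | Odd α ∧ IsNearZero (2 ^ v) (2 ^ t) (α * y % 2 ^ v)} ≤ 4 * 2 ^ t := by
  have hy0 : y ≠ 0 := by rintro rfl; simp at hy
  obtain ⟨s, m, h2m, rfl⟩ := Nat.exists_eq_pow_mul_and_not_dvd hy0 2 (by norm_num)
  have hm : Odd m := Nat.odd_iff.mpr (Nat.two_dvd_ne_zero.mp h2m)
  have hsv : s < v := by
    by_contra! h
    exact hy ((Nat.pow_dvd_pow 2 h).trans (dvd_mul_right _ _))
  obtain ⟨w, rfl⟩ : ∃ w, v = s + w := ⟨v - s, by omega⟩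
  have hw : w ≠ 0 := by omega
  calc _ = #{α ∈ range (2 ^ s * 2 ^ w) | Odd (α % 2 ^ w * m % 2 ^ w) ∧
          IsNearZero (2 ^ s * 2 ^ w) (2 ^ t) (2 ^ s * (α % 2 ^ w * m % 2 ^ w))} := by
        rw [← pow_add]
        congr 1
        refine filter_congr fun α _ => ?_
        rw [Nat.mod_mul_mod, odd_mul_mod_two_pow_iff hm hw, pow_add,
          show α * (2 ^ s * m) = 2 ^ s * (α * m) by ring, Nat.mul_mod_mul_left]
    _ ≤ 2 ^ s * #{k ∈ range (2 ^ w) | Odd (k * m % 2 ^ w) ∧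
          IsNearZero (2 ^ s * 2 ^ w) (2 ^ t) (2 ^ s * (k * m % 2 ^ w))} :=
        card_filter_mod_le _ _
          (fun k => Odd (k * m % 2 ^ w) ∧ IsNearZero _ (2 ^ t) (2 ^ s * (k * m % 2 ^ w)))
    _ ≤ 2 ^ s * #{k ∈ range (2 ^ w) | Odd k ∧
          IsNearZero (2 ^ s * 2 ^ w) (2 ^ t) (2 ^ s * k)} :=
        Nat.mul_le_mul_left _ (card_filter_mul_mod_le (hm.coprime_two_right.pow_right w)
          (fun k => Odd k ∧ IsNearZero (2 ^ s * 2 ^ w) (2 ^ t) (2 ^ s * k)))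
    _ ≤ 4 * 2 ^ t := card_odd_isNearZero_le s t w hw

open scoped Classical in
/-- for `v ≥ u ≥ 3` and an integer `x` not divisible by `2^v`, the number
of odd `α ∈ [0..2^v)` with `h_α(x) ∈ {0, 1, 2, 2^u−2, 2^u−1}` is at most `2^(v−u+2)`
(equivalently, a uniformly random odd `α` lands there with probability at most `8/2^u`). -/
theorem stmt_19 (u v : ℕ) (hu : 3 ≤ u) (huv : u ≤ v)
    (x : ℤ) (hx : ¬ ((2 : ℤ) ^ v ∣ x)) :
    ((Finset.range (2 ^ v)).filter fun α : ℕ => Odd α ∧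
        hfun u v (α : ℤ) x ∈ ({0, 1, 2, 2 ^ u - 2, 2 ^ u - 1} : Set ℤ)).card
      ≤ 2 ^ (v - u + 2) := by
  obtain ⟨y, hy⟩ : ∃ y : ℕ, (y : ℤ) = x % 2 ^ v :=
    ⟨_, Int.toNat_of_nonneg (Int.emod_nonneg _ (by positivity))⟩
  have hyv : ¬ 2 ^ v ∣ y := fun h => hx <| by
    have h : (2 : ℤ) ^ v ∣ x % 2 ^ v := by rw [← hy]; exact_mod_cast h
    rw [← Int.emod_add_mul_ediv x (2 ^ v)]
    exact dvd_add h (dvd_mul_right _ _)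
  calc _ = #{α ∈ range (2 ^ v) | Odd α ∧ IsNearZero (2 ^ v) (2 ^ (v - u)) (α * y % 2 ^ v)} := by
        congr 1
        refine filter_congr fun α _ => ?_
        rw [← hfun_emod, ← hy, hfun_mem_iff hu huv]
    _ ≤ 4 * 2 ^ (v - u) := card_odd_isNearZero_mul_le _ hyv
    _ = 2 ^ (v - u + 2) := by ring
end
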